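/- arXiv:2603.00659 — 2 statements merged into one kernel-verified Lean document; each statement's English description precedes it below -/
import Mathlib

section
/- For real numbers c₁, c₂, c₃, c₄ with c₁ + c₂ + c₃ + c₄ = 0, one has (√3/2)(|c₁| + |c₂| + |c₃| + |c₄|) ≤ √(∑_{1 ≤ i < j ≤ 4} (cᵢ - cⱼ)²). -/
theorem stmt_1 (c₁ c₂ c₃ c₄ : ℝ) (h : c₁ + c₂ + c₃ + c₄ = 0) :
    (Real.sqrt 3 / 2) * (|c₁| + |c₂| + |c₃| + |c₄|) ≤
      Real.sqrt ((c₁ - c₂) ^ 2 + (c₁ - c₃) ^ 2 + (c₁ - c₄) ^ 2 +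
        (c₂ - c₃) ^ 2 + (c₂ - c₄) ^ 2 + (c₃ - c₄) ^ 2) := by
  have hS : (0:ℝ) ≤ |c₁| + |c₂| + |c₃| + |c₄| := by positivity
  have h3 : Real.sqrt 3 ^ 2 = 3 := Real.sq_sqrt (by norm_num)
  rw [Real.le_sqrt (by positivity)]
  have e1 := sq_abs c₁; have e2 := sq_abs c₂; have e3 := sq_abs c₃; have e4 := sq_abs c₄
  nlinarith [abs_mul_abs_self c₁, neg_abs_le c₁, le_abs_self c₁,
    neg_abs_le c₂, le_abs_self c₂, neg_abs_le c₃, le_abs_self c₃,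
    neg_abs_le c₄, le_abs_self c₄,
    sq_nonneg (|c₁| - |c₂|), sq_nonneg (|c₁| - |c₃|), sq_nonneg (|c₁| - |c₄|),
    sq_nonneg (|c₂| - |c₃|), sq_nonneg (|c₂| - |c₄|), sq_nonneg (|c₃| - |c₄|),
    sq_nonneg (c₁ + c₂ + c₃ + c₄), h3, Real.sqrt_nonneg 3]
  positivity
end

section
/- Let G = (V, E) be a finite connected weighted graph with symmetric conductances c ≥ 0 and energy E(f) = (1/2)∑_{x,y} c(x,y)(f(x)-f(y))². Let u be harmonic off a boundary set V₀ with u|_{V₀} taking only values 0 and 1. Then for every edge {x, y}: c(x,y)|u(x) - u(y)| ≤ E(u). -/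
/-!
By the discrete Green identity the energy equals `∑ₓ u x · Δu x`. Off `V₀` the Laplacian
vanishes, and by the maximum principle `0 ≤ u ≤ 1`, so for every `a ∈ (0, 1]` the energy is
the sum of `Δu` over the level set `{a ≤ u}`, which by antisymmetry of the currents is the total
current flowing out of that level set. Every such current is nonnegative, and taking `a = u x`
the edge `x → y` with `u y < u x` is one of them.
-/

open Finset

namespace ResistorNetwork

variable {V : Type*}

lemma sum_sum_eq_zero_of_antisymm (s : Finset V) {f : V → V → ℝ}
    (hf : ∀ x y, f x y = -f y x) : ∑ x ∈ s, ∑ y ∈ s, f x y = 0 := by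
  have h : ∑ x ∈ s, ∑ y ∈ s, f x y = ∑ y ∈ s, ∑ x ∈ s, -f y x := by
    rw [sum_comm]
    exact sum_congr rfl fun _ _ => sum_congr rfl fun _ _ => hf _ _
  simp only [sum_neg_distrib] at h
  linarith

variable [Fintype V]

def laplacian (c : V → V → ℝ) (u : V → ℝ) (x : V) : ℝ := ∑ y, c x y * (u x - u y)

variable (c : V → V → ℝ) (u : V → ℝ)

lemma laplacian_neg (x : V) : laplacian c (-u) x = -laplacian c u x := by
  simp only [laplacian, Pi.neg_apply, ← sum_neg_distrib]
  exact sum_congr rfl fun _ _ => by ring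

lemma energy_eq_sum_mul_laplacian (hsym : ∀ x y, c x y = c y x) :
    (1 / 2) * ∑ x, ∑ y, c x y * (u x - u y) ^ 2 = ∑ x, u x * laplacian c u x := by
  have hanti : ∑ x, ∑ y, c x y * (u x ^ 2 - u y ^ 2) = 0 :=
    sum_sum_eq_zero_of_antisymm univ fun x y => by rw [hsym]; ring
  have hsplit : ∑ x, ∑ y, c x y * (u x - u y) ^ 2
      = ∑ x, ∑ y, (2 * (u x * (c x y * (u x - u y))) - c x y * (u x ^ 2 - u y ^ 2)) :=
    sum_congr rfl fun _ _ => sum_congr rfl fun _ _ => by ring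
  simp only [sum_sub_distrib, ← mul_sum, hanti] at hsplit
  rw [hsplit]
  simp only [laplacian]
  ring

lemma sum_laplacian_eq_flux (hsym : ∀ x y, c x y = c y x) (p : V → Prop) [DecidablePred p] :
    ∑ x with p x, laplacian c u x = ∑ x with p x, ∑ y with ¬p y, c x y * (u x - u y) := by
  have hinner : ∑ x with p x, ∑ y with p y, c x y * (u x - u y) = 0 :=
    sum_sum_eq_zero_of_antisymm _ fun x y => by rw [hsym]; ring
  calc ∑ x with p x, laplacian c u x
      = ∑ x with p x,
          (∑ y with p y, c x y * (u x - u y) + ∑ y with ¬p y, c x y * (u x - u y)) :=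
        sum_congr rfl fun x _ => (sum_filter_add_sum_filter_not univ p _).symm
    _ = _ := by rw [sum_add_distrib, hinner, zero_add]

lemma mul_sub_le_flux (hnonneg : ∀ x y, 0 ≤ c x y) {a : ℝ} {x y : V} (hx : a ≤ u x)
    (hy : u y < a) :
    c x y * (u x - u y) ≤ ∑ z with a ≤ u z, ∑ w with ¬a ≤ u w, c z w * (u z - u w) := by
  have hcross : ∀ z ∈ ({z | a ≤ u z} : Finset V), ∀ w ∈ ({w | ¬a ≤ u w} : Finset V),
      0 ≤ c z w * (u z - u w) := by
    intro z hz w hw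
    simp only [mem_filter, mem_univ, true_and, not_le] at hz hw
    exact mul_nonneg (hnonneg z w) (by linarith)
  have hxS : x ∈ ({z | a ≤ u z} : Finset V) := by simpa using hx
  have hyS : y ∈ ({w | ¬a ≤ u w} : Finset V) := by simpa using hy
  calc c x y * (u x - u y)
      ≤ ∑ w with ¬a ≤ u w, c x w * (u x - u w) := single_le_sum (hcross x hxS) hyS
    _ ≤ _ := single_le_sum (fun z hz => sum_nonneg (hcross z hz)) hxS

lemma sum_mul_laplacian_eq_sum_laplacian_levelSet {V₀ : Finset V}
    (hharm : ∀ x ∉ V₀, laplacian c u x = 0) (a : ℝ)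
    (hV₀ : ∀ x ∈ V₀, u x = if a ≤ u x then 1 else 0) :
    ∑ x, u x * laplacian c u x = ∑ x with a ≤ u x, laplacian c u x := by
  rw [sum_filter]
  refine sum_congr rfl fun x _ => ?_
  by_cases hx : x ∈ V₀
  · have hux := hV₀ x hx
    split_ifs at hux ⊢ <;> simp [hux]
  · simp [hharm x hx]

lemma apply_eq_of_laplacian_eq_zero_of_forall_le (hnonneg : ∀ x y, 0 ≤ c x y) {a b : V}
    (hΔ : laplacian c u a = 0) (hmax : ∀ z, u z ≤ u a) (hab : 0 < c a b) : u b = u a := by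
  have hterm := (sum_eq_zero_iff_of_nonneg fun y _ =>
    mul_nonneg (hnonneg a y) (sub_nonneg.2 (hmax y))).1 hΔ b (mem_univ b)
  linarith [(mul_eq_zero.1 hterm).resolve_left hab.ne']

lemma exists_mem_forall_le_of_laplacian_eq_zero (hsym : ∀ x y, c x y = c y x)
    (hnonneg : ∀ x y, 0 ≤ c x y) (hconn : (SimpleGraph.fromRel fun x y => 0 < c x y).Connected)
    {V₀ : Finset V} (hV₀ : V₀.Nonempty) (hharm : ∀ x ∉ V₀, laplacian c u x = 0) :
    ∃ w ∈ V₀, ∀ z, u z ≤ u w := by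
  obtain ⟨w₀, hw₀⟩ := hV₀
  obtain ⟨x₀, -, hx₀⟩ := exists_max_image univ u ⟨w₀, mem_univ _⟩
  by_contra! hlt
  have hne : ∀ w ∈ V₀, u w ≠ u x₀ := fun w hw h => by
    obtain ⟨z, hz⟩ := hlt w hw
    exact (hx₀ z (mem_univ z)).not_gt (h ▸ hz)
  -- a walk from the maximum point `x₀` to `w₀` leaves the set where `u` is maximal along an
  -- edge whose start is interior, contradicting harmonicity there
  obtain ⟨d, -, hd₁, hd₂⟩ :=
    (hconn x₀ w₀).some.exists_boundary_dart {z | u z = u x₀} rfl (hne w₀ hw₀)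
  have hd₁ : u d.fst = u x₀ := hd₁
  have hadj : 0 < c d.fst d.snd := by
    rcases ((SimpleGraph.fromRel_adj _ _ _).1 d.adj).2 with h | h
    · exact h
    · rwa [hsym]
  exact hd₂ ((apply_eq_of_laplacian_eq_zero_of_forall_le c u hnonneg
    (hharm _ fun h => hne _ h hd₁) (fun z => hd₁ ▸ hx₀ z (mem_univ z)) hadj).trans hd₁)

lemma mem_Icc_of_boundary_eq_zero_or_one (hsym : ∀ x y, c x y = c y x)
    (hnonneg : ∀ x y, 0 ≤ c x y) (hconn : (SimpleGraph.fromRel fun x y => 0 < c x y).Connected)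
    {V₀ : Finset V} (hV₀ : V₀.Nonempty) (hharm : ∀ x ∉ V₀, laplacian c u x = 0)
    (hbdry : ∀ x ∈ V₀, u x = 0 ∨ u x = 1) (z : V) : u z ∈ Set.Icc 0 1 := by
  obtain ⟨w₁, hw₁, hmax⟩ :=
    exists_mem_forall_le_of_laplacian_eq_zero c u hsym hnonneg hconn hV₀ hharm
  obtain ⟨w₂, hw₂, hmin⟩ :=
    exists_mem_forall_le_of_laplacian_eq_zero c (-u) hsym hnonneg hconn hV₀
      fun x hx => by rw [laplacian_neg, hharm x hx, neg_zero]
  have hmin : u w₂ ≤ u z := neg_le_neg_iff.1 (hmin z)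
  constructor
  · rcases hbdry w₂ hw₂ with h | h <;> linarith
  · rcases hbdry w₁ hw₁ with h | h <;> linarith [hmax z]

end ResistorNetwork

open ResistorNetwork in
theorem stmt_15_general (V : Type*) [Fintype V]
    (c : V → V → ℝ) (hsym : ∀ x y, c x y = c y x) (hnonneg : ∀ x y, 0 ≤ c x y)
    (hconn : (SimpleGraph.fromRel fun x y => 0 < c x y).Connected)
    (V₀ : Finset V) (u : V → ℝ)
    (hharm : ∀ x, x ∉ V₀ → ∑ y, c x y * (u x - u y) = 0)
    (hbdry : ∀ x ∈ V₀, u x = 0 ∨ u x = 1) :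
    ∀ x y, c x y * |u x - u y| ≤ (1 / 2) * ∑ x, ∑ y, c x y * (u x - u y) ^ 2 := by
  intro x y
  wlog hxy : u y ≤ u x generalizing x y
  · rw [abs_sub_comm, hsym]
    exact this y x (le_of_not_ge hxy)
  rcases hxy.eq_or_lt with heq | hlt
  · rw [heq, sub_self, abs_zero, mul_zero]
    exact mul_nonneg (by norm_num)
      (sum_nonneg fun p _ => sum_nonneg fun q _ => mul_nonneg (hnonneg p q) (sq_nonneg _))
  have hlevel : ∀ z ∈ V₀, u z = if u x ≤ u z then 1 else 0 := by
    intro z hz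
    have hrange := mem_Icc_of_boundary_eq_zero_or_one c u hsym hnonneg hconn ⟨z, hz⟩ hharm hbdry
    rcases hbdry z hz with h | h
    · rw [if_neg (by linarith [(hrange y).1]), h]
    · rw [if_pos (by linarith [(hrange x).2]), h]
  rw [abs_of_pos (sub_pos.2 hlt), energy_eq_sum_mul_laplacian c u hsym,
    sum_mul_laplacian_eq_sum_laplacian_levelSet c u hharm _ hlevel, sum_laplacian_eq_flux c u hsym]
  exact mul_sub_le_flux c u hnonneg le_rfl hlt

theorem stmt_15 (V : Type*) [Fintype V] [DecidableEq V] [Nonempty V]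
    (c : V → V → ℝ) (hsym : ∀ x y, c x y = c y x) (hnonneg : ∀ x y, 0 ≤ c x y)
    (hconn : (SimpleGraph.fromRel fun x y => 0 < c x y).Connected)
    (V₀ : Finset V) (u : V → ℝ)
    (hharm : ∀ x, x ∉ V₀ → ∑ y, c x y * (u x - u y) = 0)
    (hbdry : ∀ x ∈ V₀, u x = 0 ∨ u x = 1) :
    ∀ x y, c x y * |u x - u y| ≤ (1 / 2) * ∑ x, ∑ y, c x y * (u x - u y) ^ 2 :=
  stmt_15_general V c hsym hnonneg hconn V₀ u hharm hbdry
end
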